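/- arXiv:1703.03109 — 6 statements merged into one kernel-verified Lean document; each statement's English description precedes it below -/
import Mathlib

section
/- Let q be a prime power, h(x) ∈ F_q[x] a monic polynomial of degree n, R = F_q[x]/⟨h(x)⟩, and t ≥ 2. Let C be the one-generator quasi-polycyclic code in R^t generated by (1, a_1(x), a_2(x), …, a_{t−1}(x)), viewed as an F_q-linear code of length tn (of dimension n). Then each of the t blocks of n consecutive coordinates (the natural partition) is an information set of C — i.e., C is a t-CIS code with the natural partition — if and only if gcd(a_i(x), h(x)) = 1 for every 1 ≤ i ≤ t−1, where a_i(x) denotes any polynomial representative of a_i in F_q[x]. -/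
/-!
Through the coefficient isomorphism `R ≃ F^n`, the code is the image of `R` under
`r ↦ (r * a_i)_i`, so reading off block `i` is the map `r ↦ r * a_i`. That map is bijective
exactly when `a_i` is a unit of `R = F[x]/⟨h⟩`, and by Bézout this means that any representative
of `a_i` is coprime to `h`.
-/

theorem Set.bijOn_eval_range_iff_isUnit {R M ι : Type*} [CommMonoid R] {e : R → M}
    (he : Function.Bijective e) (a : ι → R) (i : ι) :
    BijOn (fun v : ι → M => v i) (range fun r i' => e (r * a i')) univ ↔ IsUnit (a i) := by
  constructor
  · intro hbij
    obtain ⟨-, ⟨r, rfl⟩, hr⟩ := hbij.surjOn (mem_univ (e 1))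
    exact .of_mul_eq_one_right r (he.injective hr)
  · intro hu
    have hcomp : Function.Bijective fun r => e (r * a i) :=
      he.comp (Units.mulRight_bijective hu.unit)
    refine ⟨mapsTo_univ _ _, ?_, ?_⟩
    · rintro _ ⟨r, rfl⟩ _ ⟨s, rfl⟩ hrs
      rw [hcomp.injective hrs]
    · intro m _
      obtain ⟨r, rfl⟩ := hcomp.surjective m
      exact ⟨_, ⟨r, rfl⟩, rfl⟩

theorem Submodule.setOf_exists_mem_span_singleton_eq_range {R M ι κ : Type*} [CommSemiring R]
    (a : ι → R) (φ : R → κ → M) :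
    {v : ι → κ → M | ∃ c ∈ span R {a}, ∀ i j, v i j = φ (c i) j} =
      Set.range fun r i => φ (r * a i) := by
  ext v
  constructor
  · rintro ⟨c, hc, hv⟩
    obtain ⟨r, rfl⟩ := mem_span_singleton.mp hc
    exact ⟨r, funext₂ fun i j => (hv i j).symm⟩
  · rintro ⟨r, rfl⟩
    exact ⟨r • a, mem_span_singleton.mpr ⟨r, rfl⟩, fun _ _ => rfl⟩

namespace AdjoinRoot

variable {R : Type*} [CommRing R] {f : Polynomial R}

theorem bijective_coeff_modByMonicHom (hf : f.Monic) :
    Function.Bijective fun (r : AdjoinRoot f) (j : Fin f.natDegree) =>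
      (modByMonicHom hf r).coeff j := by
  convert (powerBasisAux' hf).equivFun.bijective with r j
  simp [Module.Basis.equivFun_apply, powerBasisAux'_repr_apply_to_fun]

theorem isUnit_mk_iff_isCoprime {p : Polynomial R} : IsUnit (mk f p) ↔ IsCoprime p f := by
  constructor
  · intro hu
    obtain ⟨b, hb⟩ := hu.exists_left_inv
    obtain ⟨u, rfl⟩ := mk_surjective b
    rw [← map_mul, ← map_one (mk f), mk_eq_mk] at hb
    obtain ⟨v, hv⟩ := hb
    exact ⟨u, -v, by linear_combination hv⟩
  · rintro ⟨u, v, huv⟩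
    refine .of_mul_eq_one_right (mk f u) ?_
    simpa using congrArg (mk f) huv

theorem isUnit_iff_forall_isCoprime (x : AdjoinRoot f) :
    IsUnit x ↔ ∀ p : Polynomial R, mk f p = x → IsCoprime p f := by
  refine ⟨fun hx p hp => isUnit_mk_iff_isCoprime.mp (hp ▸ hx), fun hx => ?_⟩
  obtain ⟨p, rfl⟩ := mk_surjective x
  exact isUnit_mk_iff_isCoprime.mpr (hx p rfl)

end AdjoinRoot

/-- For a one-generator quasi-polycyclic code `C` in `R^t`,
`R = F_q[x]/⟨h⟩`, generated by `(1, a_1, …, a_{t-1})`, viewed as an `F_q`-linear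
code of length `t*n` via the coefficient identification `R ≃ F_q^n`, each of the
`t` natural blocks of `n` consecutive coordinates is an information set iff
`gcd(a_i, h) = 1` (i.e. any representative of `a_i` is coprime to `h`) for all
`1 ≤ i ≤ t-1`. -/
theorem stmt_0 (F : Type) [Field F] (n t : ℕ) (ht : 2 ≤ t)
    (h : Polynomial F) (hmon : h.Monic) (hdeg : h.natDegree = n)
    (a : Fin t → AdjoinRoot h) (ha0 : a ⟨0, by omega⟩ = 1) :
    -- the code `C_a ⊆ F_q^{t n}`, coordinates indexed by `Fin t × Fin n`
    (∀ i : Fin t,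
        Set.BijOn (fun v : Fin t → Fin n → F => v i)
          {v : Fin t → Fin n → F |
            ∃ c ∈ Submodule.span (AdjoinRoot h) {a},
              ∀ (i' : Fin t) (j : Fin n),
                v i' j = (AdjoinRoot.modByMonicHom hmon (c i')).coeff (j : ℕ)}
          Set.univ)
      ↔ ∀ i : Fin t, i ≠ ⟨0, by omega⟩ →
          ∀ p : Polynomial F, AdjoinRoot.mk h p = a i → IsCoprime p h := by
  subst hdeg
  rw [Submodule.setOf_exists_mem_span_singleton_eq_range a
    fun r (j : Fin h.natDegree) => (AdjoinRoot.modByMonicHom hmon r).coeff j]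
  simp only [Set.bijOn_eval_range_iff_isUnit (AdjoinRoot.bijective_coeff_modByMonicHom hmon),
    ← AdjoinRoot.isUnit_iff_forall_isCoprime]
  refine ⟨fun hunit i _ => hunit i, fun hunit i => ?_⟩
  by_cases hi : i = ⟨0, by omega⟩
  · exact hi ▸ ha0 ▸ isUnit_one
  · exact hunit i hi
end

section
/- Let q = 2^m with m ≥ 1, and suppose C is a t-CIS linear code over F_q of length tk and dimension k, i.e., the tk coordinate positions of C admit a partition into t pairwise disjoint information sets I_1, …, I_t. Then there exists a binary (F_2-linear) t-CIS code of length mkt and dimension mk; concretely, if φ_B : F_q^{tk} → (F_2^{tk})^m is the coordinatewise expansion with respect to an F_2-basis B = {e_1,…,e_m} of F_q, then φ_B(C) is an F_2-linear code of length mtk and dimension mk whose coordinate set, indexed by {1,…,tk} × {1,…,m}, is partitioned into the t pairwise disjoint information sets I_1 × {1,…,m}, …, I_t × {1,…,m}. -/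
/-!
Expanding every coordinate of a codeword in an `F₂`-basis of `F_q` is an `F₂`-linear isomorphism
`F_q^N ≅ F₂^{N × m}`, so `φ_B(C)` is an `F₂`-code of dimension `m · dim C`. Restricting `φ_B(c)`
to `I × {1,…,m}` is the expansion of the restriction of `c` to `I`; since expansion is bijective
on `F_q^I`, an information set `I` of `C` yields the information set `I × {1,…,m}` of `φ_B(C)`.
-/

open Module

variable {K F ι N : Type*} [Field K] [Field F] [Algebra K F] [Fintype ι]

/-- The coordinatewise expansion `φ_B`. -/
noncomputable def Module.Basis.expand (B : Basis ι K F) (N : Type*) :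
    (N → F) ≃ₗ[K] (N × ι → K) :=
  (LinearEquiv.piCongrRight fun _ => B.equivFun).trans (LinearEquiv.curry K K N ι).symm

theorem Module.Basis.expand_apply (B : Basis ι K F) (c : N → F) (p : N × ι) :
    B.expand N c p = B.repr (c p.1) p.2 :=
  rfl

namespace Submodule

variable {R : Type*} [Semiring R]

def IsInformationSet (C : Submodule R (N → R)) (S : Finset N) : Prop :=
  Function.Bijective fun c : C => fun x : S => (c : N → R) x

noncomputable def expand (C : Submodule F (N → F)) (B : Basis ι K F) :
    Submodule K (N × ι → K) :=
  (C.restrictScalars K).map (B.expand N).toLinearMap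

variable (C : Submodule F (N → F)) (B : Basis ι K F)

theorem coe_expand :
    (C.expand B : Set (N × ι → K)) = (fun c : N → F => fun p => B.repr (c p.1) p.2) '' C :=
  rfl

theorem finrank_expand : finrank K (C.expand B) = Fintype.card ι * finrank F C := by
  have hC : finrank K (C.restrictScalars K) = finrank K C :=
    ((restrictScalarsEquiv K F _ C).restrictScalars K).finrank_eq
  rw [expand, LinearEquiv.finrank_map_eq, hC, ← finrank_mul_finrank K F C,
    finrank_eq_card_basis B]

variable {C} {S : Finset N}

theorem IsInformationSet.expand (hS : C.IsInformationSet S) :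
    (C.expand B).IsInformationSet (S ×ˢ Finset.univ) := by
  have mem_prod (x : S) (j : ι) : (x.1, j) ∈ S ×ˢ (Finset.univ : Finset ι) := by
    simp [x.2]
  constructor
  · rintro ⟨_, c, hc, rfl⟩ ⟨_, c', hc', rfl⟩ h
    have hcc' : (⟨c, hc⟩ : C) = ⟨c', hc'⟩ := by
      refine hS.1 (funext fun x => B.repr.injective (Finsupp.ext fun j => ?_))
      exact congrFun h ⟨(x.1, j), mem_prod x j⟩
    cases hcc'
    rfl
  · intro g
    obtain ⟨c, hc⟩ := hS.2 fun x => B.equivFun.symm fun j => g ⟨(x.1, j), mem_prod x j⟩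
    refine ⟨⟨B.expand N c, c, c.2, rfl⟩, funext fun ⟨⟨x, j⟩, hp⟩ => ?_⟩
    have hx : x ∈ S := (Finset.mem_product.1 hp).1
    have hcx := congrFun hc ⟨x, hx⟩
    simp only at hcx
    simp only [Basis.expand_apply, hcx, ← B.equivFun_apply, LinearEquiv.apply_symm_apply]

end Submodule

theorem stmt_1_general (m k t : ℕ)
    (F : Type) [Field F]
    [Algebra (ZMod 2) F] (B : Module.Basis (Fin m) (ZMod 2) F)
    (C : Submodule F (Fin (t * k) → F))
    (hdim : Module.finrank F C = k)
    (I : Fin t → Finset (Fin (t * k)))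
    (hpart : ∀ x : Fin (t * k), ∃! i, x ∈ I i)
    (hinfo : ∀ i, Function.Bijective
      (fun c : C => fun x : {x // x ∈ I i} => (c : Fin (t * k) → F) x.1)) :
    ∃ D : Submodule (ZMod 2) (Fin (t * k) × Fin m → ZMod 2),
      -- `D = φ_B(C)`
      (D : Set (Fin (t * k) × Fin m → ZMod 2)) =
        (fun c : Fin (t * k) → F => fun p : Fin (t * k) × Fin m =>
          B.repr (c p.1) p.2) '' (C : Set (Fin (t * k) → F)) ∧
      -- `D` has length `m*t*k` (its coordinate type has that many elements)
      Fintype.card (Fin (t * k) × Fin m) = m * t * k ∧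
      -- `D` has dimension `m*k`
      Module.finrank (ZMod 2) D = m * k ∧
      -- the sets `I_i × univ` partition the coordinates of `D`
      (∀ p : Fin (t * k) × Fin m, ∃! i,
        p ∈ I i ×ˢ (Finset.univ : Finset (Fin m))) ∧
      -- and each `I_i × univ` is an information set of `D`
      ∀ i, Function.Bijective
        (fun d : D => fun p : {p // p ∈ I i ×ˢ (Finset.univ : Finset (Fin m))} =>
          (d : Fin (t * k) × Fin m → ZMod 2) p.1) := by
  refine ⟨C.expand B, C.coe_expand B, ?_, ?_, fun p => ?_,
    fun i => Submodule.IsInformationSet.expand B (hinfo i)⟩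
  · rw [Fintype.card_prod, Fintype.card_fin, Fintype.card_fin]
    ring
  · rw [C.finrank_expand B, hdim, Fintype.card_fin]
  · simpa only [Finset.mem_product, Finset.mem_univ, and_true] using hpart p.1

/-- descent of CIS codes from `F_{2^m}` to `F_2`.  If `C` is a
`t`-CIS linear code over `F_q`, `q = 2^m`, of length `t*k` and dimension `k`,
with pairwise disjoint information sets `I_1, …, I_t` partitioning the
coordinates, and `B` is an `F_2`-basis of `F_q`, then the coordinatewise basis
expansion `φ_B` carries `C` to an `F_2`-linear code of length `m*t*k` and
dimension `m*k` whose coordinates, indexed by `Fin (t*k) × Fin m`, are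
partitioned into the `t` pairwise disjoint information sets `I_i × univ`. -/
theorem stmt_1 (m k t : ℕ) (hm : 1 ≤ m) (hk : 0 < k) (ht : 2 ≤ t)
    (F : Type) [Field F] [Fintype F] (hcard : Fintype.card F = 2 ^ m)
    [Algebra (ZMod 2) F] (B : Module.Basis (Fin m) (ZMod 2) F)
    (C : Submodule F (Fin (t * k) → F))
    (hdim : Module.finrank F C = k)
    (I : Fin t → Finset (Fin (t * k)))
    (hIcard : ∀ i, (I i).card = k)
    (hpart : ∀ x : Fin (t * k), ∃! i, x ∈ I i)
    (hinfo : ∀ i, Function.Bijective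
      (fun c : C => fun x : {x // x ∈ I i} => (c : Fin (t * k) → F) x.1)) :
    ∃ D : Submodule (ZMod 2) (Fin (t * k) × Fin m → ZMod 2),
      -- `D = φ_B(C)`
      (D : Set (Fin (t * k) × Fin m → ZMod 2)) =
        (fun c : Fin (t * k) → F => fun p : Fin (t * k) × Fin m =>
          B.repr (c p.1) p.2) '' (C : Set (Fin (t * k) → F)) ∧
      -- `D` has length `m*t*k` (its coordinate type has that many elements)
      Fintype.card (Fin (t * k) × Fin m) = m * t * k ∧
      -- `D` has dimension `m*k`
      Module.finrank (ZMod 2) D = m * k ∧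
      -- the sets `I_i × univ` partition the coordinates of `D`
      (∀ p : Fin (t * k) × Fin m, ∃! i,
        p ∈ I i ×ˢ (Finset.univ : Finset (Fin m))) ∧
      -- and each `I_i × univ` is an information set of `D`
      ∀ i, Function.Bijective
        (fun d : D => fun p : {p // p ∈ I i ×ˢ (Finset.univ : Finset (Fin m))} =>
          (d : Fin (t * k) × Fin m → ZMod 2) p.1) :=
  stmt_1_general m k t F B C hdim I hpart hinfo
end

section
/- Let q be a prime power and let h(x) ∈ F_q[x] be a monic polynomial of degree n that is the product of r pairwise distinct monic irreducible polynomials each of equal degree n/r. Let R = F_q[x]/⟨h(x)⟩ and t ≥ 2. If b = (b_0, b_1, …, b_{t−1}) ∈ R^t is nonzero, then the number of tuples a = (a_1, …, a_{t−1}) ∈ R^{t−1} consisting of units of R such that b belongs to the R-submodule C_a of R^t generated by (1, a_1, …, a_{t−1}) is at most (q^{n/r} − 1)^{(t−1)(r−1)}. -/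
/-!
By the Chinese remainder theorem `R ≅ ∏ᵢ F[x]/⟨fᵢ⟩`, a product of `r` fields with `q^m` elements.
If `b ∈ C_a` then `b = b₀ • (1, a₁, …)`, so `b₀ ≠ 0` and `b₀ * aⱼ = bⱼ` for every `j`. Choosing a
factor `i₀` where `b₀` does not vanish, the `i₀`-component of each `aⱼ` is forced, while its other
`r - 1` components are nonzero elements of fields of size `q^m`.
-/

open Polynomial Function

theorem eq_apply_mul_of_mem_span_singleton {R J : Type*} [CommSemiring R] {a b : J → R} {j₀ : J}
    (ha : a j₀ = 1) (hb : b ∈ Submodule.span R {a}) (j : J) : b j = b j₀ * a j := by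
  obtain ⟨c, rfl⟩ := Submodule.mem_span_singleton.mp hb
  simp [ha]

theorem natCard_unitTuples_mem_span_le {R J : Type*} [CommRing R] [Finite R] [Fintype J]
    (j₀ : J) {b : J → R} (hb : b ≠ 0) {N : ℕ}
    (hN : ∀ c d : R, c ≠ 0 → Nat.card {u : R // IsUnit u ∧ c * u = d} ≤ N) :
    Nat.card {a : J → R // a j₀ = 1 ∧ (∀ j, j ≠ j₀ → IsUnit (a j)) ∧
      b ∈ Submodule.span R {a}} ≤ N ^ (Fintype.card J - 1) := by
  classical
  set S := {a : J → R // a j₀ = 1 ∧ (∀ j, j ≠ j₀ → IsUnit (a j)) ∧ b ∈ Submodule.span R {a}}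
  rcases isEmpty_or_nonempty S with _ | ⟨⟨a₀⟩⟩
  · simp
  have hb₀ : b j₀ ≠ 0 := fun h0 ↦ hb <| funext fun j ↦ by
    rw [eq_apply_mul_of_mem_span_singleton a₀.2.1 a₀.2.2.2 j, h0, zero_mul, Pi.zero_apply]
  let φ : S → ∀ j : {j // j ≠ j₀}, {u : R // IsUnit u ∧ b j₀ * u = b j} := fun a j ↦
    ⟨a.1 j, a.2.2.1 j j.2, (eq_apply_mul_of_mem_span_singleton a.2.1 a.2.2.2 j).symm⟩
  have hφ : Injective φ := by
    intro a a' h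
    ext j
    by_cases hj : j = j₀
    · rw [hj, a.2.1, a'.2.1]
    · exact congrArg Subtype.val (congrFun h ⟨j, hj⟩)
  calc Nat.card S ≤ Nat.card (∀ j : {j // j ≠ j₀}, {u : R // IsUnit u ∧ b j₀ * u = b j}) :=
        Nat.card_le_card_of_injective φ hφ
    _ = ∏ j : {j // j ≠ j₀}, Nat.card {u : R // IsUnit u ∧ b j₀ * u = b j} := Nat.card_pi
    _ ≤ N ^ Fintype.card {j // j ≠ j₀} :=
        Finset.prod_le_pow_card _ _ _ fun j _ ↦ hN _ _ hb₀
    _ = N ^ (Fintype.card J - 1) := by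
        rw [Fintype.card_subtype_compl, Fintype.card_subtype_eq]

theorem natCard_isUnit_mul_eq_le_of_ringEquiv_pi {R ι : Type*} [CommRing R] [Fintype ι]
    {K : ι → Type*} [∀ i, Field (K i)] [∀ i, Finite (K i)] (e : R ≃+* ∀ i, K i) {k : ℕ}
    (hk : ∀ i, Nat.card (K i) = k) {c : R} (hc : c ≠ 0) (d : R) :
    Nat.card {u : R // IsUnit u ∧ c * u = d} ≤ (k - 1) ^ (Fintype.card ι - 1) := by
  classical
  obtain ⟨i₀, hi₀⟩ : ∃ i₀, e c i₀ ≠ 0 :=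
    ne_iff.mp ((map_ne_zero_iff e e.injective).mpr hc)
  let φ : {u : R // IsUnit u ∧ c * u = d} → ∀ i : {i // i ≠ i₀}, (K i)ˣ := fun u i ↦
    (Pi.isUnit_iff.mp (u.2.1.map e) i).unit
  have hφ : Injective φ := by
    intro u v h
    refine Subtype.ext (e.injective (funext fun i ↦ ?_))
    by_cases hi : i = i₀
    · subst hi
      refine mul_left_cancel₀ hi₀ ?_
      simpa only [map_mul, Pi.mul_apply] using congrFun (congrArg e (u.2.2.trans v.2.2.symm)) i
    · exact congrArg Units.val (congrFun h ⟨i, hi⟩)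
  calc Nat.card {u : R // IsUnit u ∧ c * u = d} ≤ Nat.card (∀ i : {i // i ≠ i₀}, (K i)ˣ) :=
        Nat.card_le_card_of_injective φ hφ
    _ = (k - 1) ^ (Fintype.card ι - 1) := by
        rw [Nat.card_pi]
        simp only [Nat.card_units, hk, Finset.prod_const, Finset.card_univ]
        rw [Fintype.card_subtype_compl, Fintype.card_subtype_eq]

noncomputable def AdjoinRoot.prodEquivPi {R ι : Type*} [CommRing R] [Fintype ι] {f : ι → R[X]}
    (hf : Pairwise (IsCoprime on f)) : AdjoinRoot (∏ i, f i) ≃+* ∀ i, AdjoinRoot (f i) :=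
  (Ideal.quotEquivOfEq (Ideal.iInf_span_singleton fun _ _ hij ↦ hf hij).symm).trans
    (Ideal.quotientInfRingEquivPiQuotient _ fun _ _ hij ↦
      (Ideal.isCoprime_span_singleton_iff _ _).mpr (hf hij))

theorem Polynomial.pairwise_isCoprime_of_injective {K ι : Type*} [Field K] {f : ι → K[X]}
    (hinj : Injective f) (hmon : ∀ i, (f i).Monic) (hirr : ∀ i, Irreducible (f i)) :
    Pairwise (IsCoprime on f) := by
  intro i j hij
  rw [onFun, (hirr i).coprime_iff_not_dvd]
  exact fun hdvd ↦ hij (hinj (eq_of_monic_of_associated (hmon i) (hmon j)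
    ((hirr i).associated_of_dvd (hirr j) hdvd)))

theorem AdjoinRoot.natCard_eq_pow_natDegree {K : Type*} [Field K] {f : K[X]} (hf : f ≠ 0) :
    Nat.card (AdjoinRoot f) = Nat.card K ^ f.natDegree := by
  have := (AdjoinRoot.powerBasis hf).finite
  rw [Module.natCard_eq_pow_finrank (K := K), (AdjoinRoot.powerBasis hf).finrank,
    AdjoinRoot.powerBasis_dim]

theorem stmt_6 (q : ℕ) (F : Type) [Field F] [Fintype F]
    (hcard : Fintype.card F = q) (t r m : ℕ) (ht : 2 ≤ t)
    (h : Polynomial F)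
    (f : Fin r → Polynomial F) (hinj : Function.Injective f)
    (hfmon : ∀ i, (f i).Monic) (hfirr : ∀ i, Irreducible (f i))
    (hfdeg : ∀ i, (f i).natDegree = m) (hfac : h = ∏ i, f i)
    (b : Fin t → AdjoinRoot h) (hb : b ≠ 0) :
    Nat.card {a : Fin t → AdjoinRoot h //
        a ⟨0, by omega⟩ = 1 ∧ (∀ i, i ≠ ⟨0, by omega⟩ → IsUnit (a i)) ∧
        b ∈ Submodule.span (AdjoinRoot h) {a}} ≤
      (q ^ m - 1) ^ ((t - 1) * (r - 1)) := by
  subst hfac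
  have : ∀ i, Fact (Irreducible (f i)) := fun i ↦ ⟨hfirr i⟩
  have hcardK : ∀ i, Nat.card (AdjoinRoot (f i)) = q ^ m := fun i ↦ by
    rw [AdjoinRoot.natCard_eq_pow_natDegree (hfmon i).ne_zero, Nat.card_eq_fintype_card, hcard,
      hfdeg]
  have : ∀ i, Finite (AdjoinRoot (f i)) := fun i ↦ Nat.finite_of_card_ne_zero <| by
    rw [hcardK, ← hcard]
    exact pow_ne_zero _ Fintype.card_ne_zero
  let e := AdjoinRoot.prodEquivPi (pairwise_isCoprime_of_injective hinj hfmon hfirr)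
  have : Finite (AdjoinRoot (∏ i, f i)) := Finite.of_equiv _ e.symm.toEquiv
  calc _ ≤ ((q ^ m - 1) ^ (Fintype.card (Fin r) - 1)) ^ (Fintype.card (Fin t) - 1) :=
        natCard_unitTuples_mem_span_le _ hb fun c d hc ↦
          natCard_isUnit_mul_eq_le_of_ringEquiv_pi e hcardK hc d
    _ = (q ^ m - 1) ^ ((t - 1) * (r - 1)) := by
        rw [Fintype.card_fin, Fintype.card_fin, ← pow_mul, mul_comm]
end

section
/- Fix a prime power q, an integer t ≥ 2, an element α ∈ F_q^*, and a real number δ with 0 < δ < (q−1)/q and H_q(δ) < (t−1)/t. Suppose that x^n − α is irreducible in F_q[x] for infinitely many positive integers n. Then for infinitely many such n there exists a tuple (a_1, …, a_{t−1}) of units of R = F_q[x]/⟨x^n − α⟩ such that the one-generator quasi-twisted t-CIS code C_a generated by (1, a_1, …, a_{t−1}) — an F_q-linear code of length tn, dimension n, and rate 1/t — has minimum Hamming distance at least δ·tn. -/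
open Polynomial

/-- The `q`-ary entropy function. -/
noncomputable def qaryEntropy (q : ℕ) (y : ℝ) : ℝ :=
  y * Real.logb q ((q : ℝ) - 1) - y * Real.logb q y - (1 - y) * Real.logb q (1 - y)

/-- Hamming weight on `R^t`, `R = F_q[x]/⟨h⟩`, via the coefficient
identification. -/
noncomputable def qpcWeight {F : Type*} [CommRing F] {h : Polynomial F}
    (hmon : h.Monic) {t : ℕ} (c : Fin t → AdjoinRoot h) : ℕ :=
  ∑ i, (AdjoinRoot.modByMonicHom hmon (c i)).support.card

/-!
When `x^n - α` is irreducible, `R` is the field `F_{q^n}`, so a nonzero codeword `v = r • a` of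
`C_a` recovers its generator as `a = v₀⁻¹ • v`. Hence the generators `a = (1, a_1, …, a_{t-1})`
with all `a_i ≠ 0` whose code contains a nonzero word of weight `< δtn` are at most as many as
the words of weight `< δtn` in `F_q^{tn}`. Weighting each word by the product measure that gives
mass `1 - δ` to `0` and `δ/(q-1)` to every other symbol bounds that number by `q^{tn H_q(δ)}`,
and since `H_q(δ) < (t-1)/t` this is less than the number `(q^n - 1)^{t-1}` of generators for
all large `n`.
-/

open Finset

section HammingBall

variable {F ι : Type*} [Fintype F] [DecidableEq F] [Zero F] [Fintype ι]

variable (F) in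
noncomputable def symbolWeight (p : ℝ) (x : F) : ℝ :=
  if x = 0 then 1 - p else p / (Fintype.card F - 1)

theorem symbolWeight_nonneg (hF : 1 < Fintype.card F) {p : ℝ} (hp0 : 0 ≤ p) (hp1 : p ≤ 1)
    (x : F) : 0 ≤ symbolWeight F p x := by
  have : (1 : ℝ) < Fintype.card F := by exact_mod_cast hF
  unfold symbolWeight
  split_ifs
  exacts [sub_nonneg.mpr hp1, div_nonneg hp0 (by linarith)]

theorem sum_symbolWeight (hF : 1 < Fintype.card F) (p : ℝ) : ∑ x, symbolWeight F p x = 1 := by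
  have hq : ((Fintype.card F : ℝ) - 1) ≠ 0 := by
    rw [sub_ne_zero]; exact_mod_cast hF.ne'
  have hnz : ∀ x ∈ univ.erase (0 : F), symbolWeight F p x = p / (Fintype.card F - 1) :=
    fun x hx => if_neg (ne_of_mem_erase hx)
  rw [← add_sum_erase _ _ (mem_univ 0), sum_congr rfl hnz, sum_const,
    card_erase_of_mem (mem_univ _), card_univ, nsmul_eq_mul, Nat.cast_sub hF.le, Nat.cast_one,
    symbolWeight, if_pos rfl]
  field_simp
  ring

theorem sum_prod_symbolWeight [DecidableEq ι] (hF : 1 < Fintype.card F) (p : ℝ) :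
    ∑ u : ι → F, ∏ i, symbolWeight F p (u i) = 1 := by
  rw [← Fintype.prod_sum (fun _ x => symbolWeight F p x), sum_symbolWeight hF, prod_const_one]

theorem prod_symbolWeight {p : ℝ} (hp : p ≠ 1) (u : ι → F) :
    ∏ i, symbolWeight F p (u i) =
      (1 - p) ^ Fintype.card ι * (p / ((Fintype.card F - 1) * (1 - p))) ^ hammingNorm u := by
  have h1p : 1 - p ≠ 0 := sub_ne_zero.mpr hp.symm
  have : ∀ i, symbolWeight F p (u i) =
      (1 - p) * if u i ≠ 0 then p / ((Fintype.card F - 1) * (1 - p)) else 1 := by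
    intro i
    rcases eq_or_ne (u i) 0 with hi | hi
    · simp [symbolWeight, hi]
    · rw [symbolWeight, if_neg hi, if_pos hi]
      field_simp
  simp_rw [this, prod_mul_distrib, prod_const, card_univ, prod_ite, prod_const_one, mul_one,
    prod_const, hammingNorm]

theorem rpow_neg_qaryEntropy {q : ℕ} (hq : 1 < q) {p : ℝ} (hp0 : 0 < p) (hp1 : p < 1) :
    (q : ℝ) ^ (-qaryEntropy q p) = (1 - p) * (p / ((q - 1) * (1 - p))) ^ p := by
  have hq1 : (0 : ℝ) < q - 1 := by
    rw [sub_pos]; exact_mod_cast hq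
  have h1p : 0 < 1 - p := by linarith
  have hlogq : Real.log q ≠ 0 := (Real.log_pos (by exact_mod_cast hq)).ne'
  have hr : 0 < p / ((q - 1) * (1 - p)) := by positivity
  have hrp : 0 < (p / ((q - 1) * (1 - p))) ^ p := Real.rpow_pos_of_pos hr p
  rw [Real.rpow_def_of_pos (by positivity), ← Real.exp_log (mul_pos h1p hrp),
    Real.log_mul h1p.ne' hrp.ne', Real.log_rpow hr,
    Real.log_div hp0.ne' (by positivity), Real.log_mul hq1.ne' h1p.ne']
  unfold qaryEntropy Real.logb
  field_simp
  congr 1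
  ring

theorem card_le_rpow_qaryEntropy_of_hammingNorm_le {p : ℝ} (hp0 : 0 < p)
    (hpq : p ≤ ((Fintype.card F : ℝ) - 1) / Fintype.card F) (B : Finset (ι → F))
    (hB : ∀ u ∈ B, (hammingNorm u : ℝ) ≤ p * Fintype.card ι) :
    (#B : ℝ) ≤ (Fintype.card F : ℝ) ^ (Fintype.card ι * qaryEntropy (Fintype.card F) p) := by
  classical
  set q := Fintype.card F
  have hq0 : (0 : ℝ) < q := by exact_mod_cast Fintype.card_pos
  have hq : 1 < q := by
    by_contra! h
    have : ((q : ℝ) - 1) / q ≤ 0 :=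
      div_nonpos_of_nonpos_of_nonneg (by rw [sub_nonpos]; exact_mod_cast h) hq0.le
    linarith
  have hp1 : p < 1 := hpq.trans_lt <| by rw [div_lt_one hq0]; linarith
  set r := p / ((q - 1) * (1 - p))
  have hr0 : 0 < r := div_pos hp0 (mul_pos (by rw [sub_pos]; exact_mod_cast hq) (by linarith))
  have hr1 : r ≤ 1 := by
    rw [div_le_one (mul_pos (by rw [sub_pos]; exact_mod_cast hq) (by linarith))]
    have := (le_div_iff₀ hq0).mp hpq
    nlinarith
  set θ := (q : ℝ) ^ (-(Fintype.card ι * qaryEntropy q p)) with hθ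
  have hθ_le : ∀ u ∈ B, θ ≤ ∏ i, symbolWeight F p (u i) := by
    intro u hu
    rw [hθ, neg_mul_eq_mul_neg, mul_comm, Real.rpow_mul_natCast hq0.le,
      rpow_neg_qaryEntropy hq hp0 hp1, mul_pow, ← Real.rpow_mul_natCast hr0.le,
      prod_symbolWeight hp1.ne, ← Real.rpow_natCast r]
    exact mul_le_mul_of_nonneg_left (Real.rpow_le_rpow_of_exponent_ge hr0 hr1 (hB u hu))
      (pow_nonneg (by linarith) _)
  have : #B * θ ≤ 1 :=
    calc #B * θ = ∑ _u ∈ B, θ := by rw [sum_const, nsmul_eq_mul]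
      _ ≤ ∑ u ∈ B, ∏ i, symbolWeight F p (u i) := sum_le_sum hθ_le
      _ ≤ ∑ u : ι → F, ∏ i, symbolWeight F p (u i) :=
        sum_le_sum_of_subset_of_nonneg (subset_univ B) fun u _ _ =>
          prod_nonneg fun i _ => symbolWeight_nonneg hq hp0.le hp1.le (u i)
      _ = 1 := sum_prod_symbolWeight hq p
  rwa [hθ, Real.rpow_neg hq0.le, ← div_eq_mul_inv, div_le_one₀ (by positivity)] at this

end HammingBall

theorem card_piFinset_update_erase_zero {K ι : Type*} [Field K] [Fintype K] [DecidableEq K]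
    [Fintype ι] [DecidableEq ι] (i₀ : ι) :
    #(Fintype.piFinset (Function.update (fun _ => univ.erase 0) i₀ {1} : ι → Finset K)) =
      (Fintype.card K - 1) ^ (Fintype.card ι - 1) := by
  have hcards : (fun i => #(Function.update (fun _ => univ.erase 0) i₀ {1} i : Finset K)) =
      Function.update (fun _ => Fintype.card K - 1) i₀ 1 := funext fun i => by
    rw [Function.apply_update (fun _ s => #s), card_singleton, card_erase_of_mem (mem_univ _),
      card_univ]
  rw [Fintype.card_piFinset, hcards, prod_update_of_mem (mem_univ i₀), one_mul, prod_const,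
    card_univ_sdiff, card_singleton]

theorem exists_forall_le_weight_smul {K ι : Type*} [Field K] [Fintype K] [DecidableEq K]
    [Fintype ι] [DecidableEq ι] (i₀ : ι) (W : (ι → K) → ℝ) (d : ℝ)
    (hL : #{v | W v < d} < (Fintype.card K - 1) ^ (Fintype.card ι - 1)) :
    ∃ a : ι → K, a i₀ = 1 ∧ (∀ i ≠ i₀, a i ≠ 0) ∧ ∀ r : K, r ≠ 0 → d ≤ W (r • a) := by
  classical
  set A := Fintype.piFinset (Function.update (fun _ => univ.erase 0) i₀ {1} : ι → Finset K)
  have hA : ∀ a ∈ A, a i₀ = 1 ∧ ∀ i ≠ i₀, a i ≠ 0 := by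
    intro a ha
    rw [Fintype.mem_piFinset] at ha
    refine ⟨by simpa using ha i₀, fun i hi => ?_⟩
    simpa [Function.update_of_ne hi] using ha i
  set bad := A.filter fun a => ∃ r : K, r ≠ 0 ∧ W (r • a) < d
  have hbad : bad ⊆ image (fun v => (v i₀)⁻¹ • v) {v | W v < d} := by
    intro a ha
    obtain ⟨haA, r, hr, hW⟩ := mem_filter.mp ha
    refine mem_image.mpr ⟨r • a, mem_filter.mpr ⟨mem_univ _, hW⟩, ?_⟩
    rw [Pi.smul_apply, (hA a haA).1, smul_eq_mul, mul_one, smul_smul, inv_mul_cancel₀ hr, one_smul]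
  have : #bad < #A := by
    rw [card_piFinset_update_erase_zero]
    exact (card_le_card hbad |>.trans card_image_le).trans_lt hL
  obtain ⟨a, haA, ha⟩ := exists_mem_notMem_of_card_lt_card this
  refine ⟨a, (hA a haA).1, (hA a haA).2, fun r hr => ?_⟩
  by_contra! hW
  exact ha (mem_filter.mpr ⟨haA, r, hr, hW⟩)

theorem hammingNorm_uncurry {ι κ β : Type*} [Fintype ι] [Fintype κ] [Zero β] [DecidableEq β]
    (x : ι → κ → β) : hammingNorm (fun p : ι × κ => x p.1 p.2) = ∑ i, hammingNorm (x i) := by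
  simp only [hammingNorm, card_filter, Fintype.sum_prod_type]

section AdjoinRootCoords

variable {F : Type*} [Field F] {h : F[X]} (hmon : h.Monic)

theorem AdjoinRoot.lt_natDegree_of_mem_support_modByMonicHom (r : AdjoinRoot h) {k : ℕ}
    (hk : k ∈ (AdjoinRoot.modByMonicHom hmon r).support) : k < h.natDegree := by
  obtain ⟨f, rfl⟩ := AdjoinRoot.mk_surjective r
  rw [AdjoinRoot.modByMonicHom_mk, mem_support_iff] at hk
  by_contra! hle
  refine hk (coeff_eq_zero_of_degree_lt ((degree_modByMonic_lt f hmon).trans_le ?_))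
  rw [degree_eq_natDegree hmon.ne_zero]
  exact_mod_cast hle

theorem AdjoinRoot.card_support_modByMonicHom [DecidableEq F] (r : AdjoinRoot h) :
    #(AdjoinRoot.modByMonicHom hmon r).support =
      hammingNorm fun i : Fin h.natDegree => (AdjoinRoot.modByMonicHom hmon r).coeff i := by
  symm
  refine card_bij (fun i _ => i) (fun i hi => ?_) (fun i _ j _ => Fin.ext) fun k hk => ?_
  · exact mem_support_iff.mpr (mem_filter.mp hi).2
  · exact ⟨⟨k, AdjoinRoot.lt_natDegree_of_mem_support_modByMonicHom hmon r hk⟩,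
      mem_filter.mpr ⟨mem_univ _, mem_support_iff.mp hk⟩, rfl⟩

noncomputable def qpcCoords {t : ℕ} (c : Fin t → AdjoinRoot h) : Fin t × Fin h.natDegree → F :=
  fun p => (AdjoinRoot.modByMonicHom hmon (c p.1)).coeff p.2

-- The coordinates of `AdjoinRoot.powerBasis'` are these coefficients by definition.
theorem qpcCoords_injective {t : ℕ} : Function.Injective (qpcCoords hmon (t := t)) :=
  fun _ _ hcc' => funext fun i => (AdjoinRoot.powerBasis' hmon).basis.equivFun.injective <|
    funext fun j => congrFun hcc' (i, j)

theorem hammingNorm_qpcCoords [DecidableEq F] {t : ℕ} (c : Fin t → AdjoinRoot h) :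
    hammingNorm (qpcCoords hmon c) = qpcWeight hmon c :=
  (hammingNorm_uncurry fun i (j : Fin h.natDegree) =>
    (AdjoinRoot.modByMonicHom hmon (c i)).coeff j).trans <| by
      simp only [qpcWeight, AdjoinRoot.card_support_modByMonicHom]

end AdjoinRootCoords

theorem exists_qt_code_le_qpcWeight {F : Type*} [Field F] [Fintype F] {h : F[X]}
    (hmon : h.Monic) [Fact (Irreducible h)] {t : ℕ} (i₀ : Fin t) {δ : ℝ} (hδ0 : 0 < δ)
    (hδ1 : δ < ((Fintype.card F : ℝ) - 1) / Fintype.card F)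
    (hvol : (Fintype.card F : ℝ) ^ ((t * h.natDegree : ℕ) * qaryEntropy (Fintype.card F) δ) <
      ((Fintype.card F : ℝ) ^ h.natDegree - 1) ^ (t - 1)) :
    ∃ a : Fin t → AdjoinRoot h, a i₀ = 1 ∧ (∀ i ≠ i₀, IsUnit (a i)) ∧
      ∀ c ∈ Submodule.span (AdjoinRoot h) {a}, c ≠ 0 →
        δ * (t * h.natDegree) ≤ qpcWeight hmon c := by
  classical
  let b := (AdjoinRoot.powerBasis' hmon).basis
  let _ : Fintype (AdjoinRoot h) := Fintype.ofEquiv _ b.equivFun.toEquiv.symm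
  have hcard : Fintype.card (AdjoinRoot h) = Fintype.card F ^ h.natDegree := by
    rw [Module.card_fintype b, Fintype.card_fin]; rfl
  set L : Finset (Fin t → AdjoinRoot h) := {v | (qpcWeight hmon v : ℝ) < δ * (t * h.natDegree)}
  have hL : (#L : ℝ) ≤
      (Fintype.card F : ℝ) ^ ((t * h.natDegree : ℕ) * qaryEntropy (Fintype.card F) δ) := by
    have := card_le_rpow_qaryEntropy_of_hammingNorm_le hδ0 hδ1.le
      (L.map ⟨qpcCoords hmon, qpcCoords_injective hmon⟩) fun u hu => ?_
    · simpa using this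
    obtain ⟨v, hv, rfl⟩ := mem_map.mp hu
    simp only [Function.Embedding.coeFn_mk, hammingNorm_qpcCoords, Fintype.card_prod,
      Fintype.card_fin]
    push_cast
    exact (mem_filter.mp hv).2.le
  obtain ⟨a, ha1, ha0, hW⟩ := exists_forall_le_weight_smul i₀ (fun v => (qpcWeight hmon v : ℝ))
    (δ * ((t : ℝ) * h.natDegree)) <| by
      have : 1 ≤ Fintype.card F ^ h.natDegree := Nat.one_le_pow _ _ Fintype.card_pos
      rw [hcard, Fintype.card_fin, ← Nat.cast_lt (α := ℝ)]
      push_cast [this]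
      exact hL.trans_lt hvol
  refine ⟨a, ha1, fun i hi => (ha0 i hi).isUnit, fun c hc hc0 => ?_⟩
  obtain ⟨r, rfl⟩ := Submodule.mem_span_singleton.mp hc
  exact hW r (by rintro rfl; simp at hc0)

open Filter in
theorem eventually_rpow_qaryEntropy_lt {q t : ℕ} (hq : 2 ≤ q) {H : ℝ} (hH : t * H < t - 1) :
    ∀ᶠ n : ℕ in atTop, (q : ℝ) ^ ((t * n : ℕ) * H) < ((q : ℝ) ^ n - 1) ^ (t - 1) := by
  have ht : 1 ≤ t := by
    rcases Nat.eq_zero_or_pos t with rfl | h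
    · norm_num at hH
    · exact h
  have hq2 : (2 : ℝ) ≤ q := by exact_mod_cast hq
  have hq1 : (1 : ℝ) < q := by linarith
  have hε : 0 < (t : ℝ) - 1 - t * H := by linarith
  filter_upwards [eventually_ge_atTop 1,
    tendsto_natCast_atTop_atTop.eventually_gt_atTop (((t : ℝ) - 1) / ((t : ℝ) - 1 - t * H))]
    with n hn hnε
  rw [div_lt_iff₀ hε] at hnε
  have hqn : (q : ℝ) ≤ (q : ℝ) ^ n := le_self_pow₀ hq1.le (by omega)
  calc (q : ℝ) ^ ((t * n : ℕ) * H) < (q : ℝ) ^ (((n : ℝ) - 1) * ((t - 1 : ℕ) : ℝ)) := by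
        refine Real.rpow_lt_rpow_of_exponent_lt hq1 ?_
        push_cast [ht]
        nlinarith
    _ = ((q : ℝ) ^ n / q) ^ (t - 1) := by
        rw [Real.rpow_mul_natCast (by positivity), Real.rpow_sub_one (by positivity),
          Real.rpow_natCast]
    _ ≤ ((q : ℝ) ^ n - 1) ^ (t - 1) := by
        gcongr
        rw [div_le_iff₀ (by positivity)]
        nlinarith [mul_le_mul_of_nonneg_left (by linarith : (1 : ℝ) ≤ q - 1)
          (by positivity : (0 : ℝ) ≤ q ^ n)]

/-- fix a prime power `q`, `t ≥ 2`, `α ∈ F_q^*` and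
`0 < δ < (q-1)/q` with `H_q(δ) < (t-1)/t`.  If `x^n − α` is irreducible over
`F_q` for infinitely many `n`, then for infinitely many such `n` there is a
tuple of units `(a_1, …, a_{t-1})` of `R = F_q[x]/⟨x^n − α⟩` such that the
one-generator quasi-twisted `t`-CIS code generated by `(1, a_1, …, a_{t-1})`
(length `tn`, dimension `n`, rate `1/t`) has minimum Hamming distance at least
`δ·t·n`. -/
theorem stmt_10 (q t : ℕ) (ht : 2 ≤ t)
    (F : Type) [Field F] [Fintype F] (hcard : Fintype.card F = q)
    (α : F)
    (δ : ℝ) (hδ0 : 0 < δ) (hδ1 : δ < ((q : ℝ) - 1) / q)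
    (hent : qaryEntropy q δ < ((t : ℝ) - 1) / t)
    (hinf : {n : ℕ | 0 < n ∧ Irreducible (X ^ n - C α : Polynomial F)}.Infinite) :
    {n : ℕ | ∃ hn : 0 < n, Irreducible (X ^ n - C α : Polynomial F) ∧
      ∃ a : Fin t → AdjoinRoot (X ^ n - C α : Polynomial F),
        a ⟨0, by omega⟩ = 1 ∧ (∀ i, i ≠ ⟨0, by omega⟩ → IsUnit (a i)) ∧
        ∀ c ∈ Submodule.span (AdjoinRoot (X ^ n - C α : Polynomial F)) {a},
          c ≠ 0 →
            δ * ((t : ℝ) * n) ≤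
              (qpcWeight (monic_X_pow_sub_C α hn.ne') c : ℝ)}.Infinite := by
  subst hcard
  have hq : 2 ≤ Fintype.card F := Fintype.one_lt_card
  have htH : (t : ℝ) * qaryEntropy (Fintype.card F) δ < t - 1 := by
    rwa [lt_div_iff₀ (by positivity), mul_comm] at hent
  refine Nat.frequently_atTop_iff_infinite.mp <|
    ((Nat.frequently_atTop_iff_infinite.mpr hinf).and_eventually
      (eventually_rpow_qaryEntropy_lt hq htH)).mono ?_
  rintro n ⟨⟨hn, hirr⟩, hvol⟩
  have : Fact (Irreducible (X ^ n - C α)) := ⟨hirr⟩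
  have hdeg := natDegree_X_pow_sub_C (n := n) (r := α)
  obtain ⟨a, ha⟩ := exists_qt_code_le_qpcWeight (monic_X_pow_sub_C α hn.ne')
    (⟨0, by omega⟩ : Fin t) hδ0 hδ1 (by rwa [hdeg])
  exact ⟨hn, hirr, a, by rwa [hdeg] at ha⟩
end

section
/- There exist units a_1(x), a_2(x) of R = F_2[x]/⟨x^5 − 1⟩ such that the binary one-generator quasi-cyclic 3-CIS code C_a = {(u, a_1·u, a_2·u) : u ∈ R}, an F_2-linear code of length 15 and dimension 5, has minimum Hamming distance 7 (which equals the best possible minimum distance of any binary linear [15, 5] code). -/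
open Polynomial

lemma monic_X_pow_sub_one' {F : Type*} [Field F] {n : ℕ} (hn : n ≠ 0) :
    ((X : Polynomial F) ^ n - 1).Monic := by
  simpa using monic_X_pow_sub_C (1 : F) hn

/-!
Coordinates with respect to `1, x, …, x⁴` identify `R` with `F₂⁵` and turn multiplication by `a`
into the circulant matrix of the coordinates of `a`. Hence the weight of `(u, a₁u, a₂u)` is
`wt m + wt (C₁ m) + wt (C₂ m)` with `m` the coordinates of `u`. For `a₁ = 1 + x + x²` and
`a₂ = 1 + x + x³` (with inverses `x + x² + x⁴` and `x + x² + x³`) this is at least 7 for each of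
the 31 nonzero `m`, with equality at `u = 1`.

Optimality is the Plotkin bound: each coordinate is nonzero on at most half of the words of a binary
linear code, so the 31 nonzero words of a `[15, 5]` code have total weight at most
`15 · 16 = 240 < 31 · 8`.
-/

open Finset Matrix Module

namespace Submodule

variable {ι : Type*} (D : Submodule (ZMod 2) (ι → ZMod 2))

lemma two_mul_card_apply_ne_zero_le [Fintype D] (i : ι) :
    2 * #{v : D | (v : ι → ZMod 2) i ≠ 0} ≤ Fintype.card D := by
  classical
  have eq_one : ∀ x : ZMod 2, x ≠ 0 → x = 1 := by decide
  obtain h | ⟨w, hw⟩ := (univ.filter fun v : D => (v : ι → ZMod 2) i ≠ 0).eq_empty_or_nonempty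
  · rw [h, card_empty]; omega
  have hw : (w : ι → ZMod 2) i = 1 := eq_one _ (by simpa using hw)
  -- translating by `w` maps the words that are nonzero at `i` into those that vanish there
  have hle : #{v : D | (v : ι → ZMod 2) i ≠ 0} ≤ #{v : D | ¬(v : ι → ZMod 2) i ≠ 0} := by
    refine card_le_card_of_injOn (· + w) (fun v hv => ?_) (add_left_injective w).injOn
    have hv : (v : ι → ZMod 2) i = 1 := eq_one _ (by simpa using hv)
    simpa [hv, hw] using (by decide : (1 + 1 : ZMod 2) = 0)
  have := card_filter_add_card_filter_not (s := univ) fun v : D => (v : ι → ZMod 2) i ≠ 0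
  rw [card_univ] at this
  omega

lemma sum_hammingNorm_eq_sum_card [Fintype ι] [Fintype D] :
    ∑ v : D, hammingNorm (v : ι → ZMod 2) = ∑ i, #{v : D | (v : ι → ZMod 2) i ≠ 0} := by
  simp only [hammingNorm, card_filter]
  exact sum_comm

/-- The Plotkin bound for binary linear codes. -/
theorem two_mul_card_sub_one_mul_le [Fintype ι] {d : ℕ}
    (hd : ∀ v ∈ D, v ≠ 0 → d ≤ hammingNorm v) :
    2 * ((Nat.card D - 1) * d) ≤ Fintype.card ι * Nat.card D := by
  classical
  rw [Nat.card_eq_fintype_card]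
  have hlower : (Fintype.card D - 1) * d ≤ ∑ v : D, hammingNorm (v : ι → ZMod 2) := by
    calc (Fintype.card D - 1) * d = #((univ : Finset D).erase 0) • d := by
          rw [card_erase_of_mem (mem_univ _), card_univ, smul_eq_mul]
      _ ≤ ∑ v ∈ (univ : Finset D).erase 0, hammingNorm (v : ι → ZMod 2) :=
          card_nsmul_le_sum _ _ _ fun v hv => hd v v.2 (by simpa using ne_of_mem_erase hv)
      _ ≤ ∑ v : D, hammingNorm (v : ι → ZMod 2) := sum_le_sum_of_subset (erase_subset _ _)
  have hupper : 2 * ∑ v : D, hammingNorm (v : ι → ZMod 2) ≤ Fintype.card ι * Fintype.card D := by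
    rw [sum_hammingNorm_eq_sum_card, mul_sum]
    simpa using sum_le_sum fun i (_ : i ∈ univ) => two_mul_card_apply_ne_zero_le D i
  omega

lemma exists_ne_zero_hammingNorm_le_seven (D : Submodule (ZMod 2) (Fin 15 → ZMod 2))
    (hD : finrank (ZMod 2) D = 5) : ∃ v ∈ D, v ≠ 0 ∧ hammingNorm v ≤ 7 := by
  by_contra! h
  have := two_mul_card_sub_one_mul_le D (d := 8) h
  rw [natCard_eq_pow_finrank (K := ZMod 2), Nat.card_zmod, hD] at this
  simp at this

end Submodule

namespace Polynomial

variable {F : Type*} {n : ℕ}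

lemma monic_X_pow_sub_one [Ring F] [NeZero n] : (X ^ n - 1 : F[X]).Monic := by
  simpa using monic_X_pow_sub_C (1 : F) (NeZero.ne n)

lemma natDegree_X_pow_sub_one [Ring F] [Nontrivial F] : (X ^ n - 1 : F[X]).natDegree = n := by
  simpa using natDegree_X_pow_sub_C (n := n) (r := (1 : F))

lemma card_support_eq_hammingNorm [Semiring F] [DecidableEq F] {p : F[X]} (hp : p.degree < n) :
    #p.support = hammingNorm fun i : Fin n => p.coeff i := by
  rw [hammingNorm, ← card_map Fin.valEmbedding]
  congr 1
  ext k
  simp only [mem_support_iff, mem_map, mem_filter, mem_univ, true_and, Fin.valEmbedding_apply]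
  constructor
  · intro hk
    have hkn : k < n := by
      by_contra! h
      exact hk (coeff_eq_zero_of_degree_lt (hp.trans_le (by exact_mod_cast h)))
    exact ⟨⟨k, hkn⟩, hk, rfl⟩
  · rintro ⟨i, hi, rfl⟩
    exact hi

end Polynomial

namespace AdjoinRoot

variable {F : Type*} [CommRing F] {n : ℕ}

lemma root_X_pow_sub_one_pow : root (X ^ n - 1 : F[X]) ^ n = 1 := by
  have h := mk_self (f := (X ^ n - 1 : F[X]))
  rwa [map_sub, map_pow, mk_X, map_one, sub_eq_zero] at h

variable (F n) [NeZero n] [Nontrivial F]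

noncomputable def cyclicBasis : Basis (Fin n) F (AdjoinRoot (X ^ n - 1 : F[X])) :=
  (powerBasis' monic_X_pow_sub_one).basis.reindex (finCongr natDegree_X_pow_sub_one)

variable {F n}

lemma cyclicBasis_apply (i : Fin n) : cyclicBasis F n i = root (X ^ n - 1 : F[X]) ^ (i : ℕ) := by
  rw [cyclicBasis, Basis.reindex_apply, PowerBasis.coe_basis, powerBasis'_gen]
  rfl

lemma cyclicBasis_mul (i j : Fin n) :
    cyclicBasis F n i * cyclicBasis F n j = cyclicBasis F n (i + j) := by
  simp only [cyclicBasis_apply, ← pow_add, Fin.val_add]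
  exact pow_eq_pow_mod _ root_X_pow_sub_one_pow

lemma cyclicBasis_equivFun_one : (cyclicBasis F n).equivFun 1 = Pi.single 0 1 := by
  rw [← pow_zero (root _), ← Fin.val_zero n, ← cyclicBasis_apply]
  ext i
  rw [Basis.equivFun_self]
  simp [Pi.single_apply, eq_comm]

instance : Nontrivial (AdjoinRoot (X ^ n - 1 : F[X])) :=
  nontrivial_of_ne 1 0 fun h => by
    simpa [h] using congrFun (cyclicBasis_equivFun_one (F := F) (n := n)) 0

lemma cyclicBasis_equivFun_mul (a u : AdjoinRoot (X ^ n - 1 : F[X])) :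
    (cyclicBasis F n).equivFun (a * u) =
      circulant ((cyclicBasis F n).equivFun a) *ᵥ (cyclicBasis F n).equivFun u := by
  rw [← LinearEquiv.eq_symm_apply, Basis.equivFun_symm_apply]
  set A := (cyclicBasis F n).equivFun a
  set M := (cyclicBasis F n).equivFun u
  calc a * u = ∑ j, ∑ k, (A j * M k) • cyclicBasis F n (j + k) := by
        rw [← (cyclicBasis F n).sum_equivFun a, ← (cyclicBasis F n).sum_equivFun u, sum_mul_sum]
        simp only [smul_mul_smul_comm, cyclicBasis_mul, A, M]
    _ = ∑ k, ∑ l, (A (l - k) * M k) • cyclicBasis F n l := by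
        rw [sum_comm]
        exact sum_congr rfl fun k _ =>
          Fintype.sum_equiv (Equiv.addRight k) _ _ fun j => by simp
    _ = ∑ l, (circulant A *ᵥ M) l • cyclicBasis F n l := by
        simp only [mulVec, dotProduct, circulant_apply, sum_smul]
        exact sum_comm

lemma isUnit_of_circulant_mulVec_eq_single {A B : Fin n → F}
    (h : circulant A *ᵥ B = Pi.single 0 1) : IsUnit ((cyclicBasis F n).equivFun.symm A) := by
  refine IsUnit.of_mul_eq_one ((cyclicBasis F n).equivFun.symm B)
    ((cyclicBasis F n).equivFun.injective ?_)
  rwa [cyclicBasis_equivFun_mul, cyclicBasis_equivFun_one, LinearEquiv.apply_symm_apply,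
    LinearEquiv.apply_symm_apply]

variable [DecidableEq F]

lemma card_support_modByMonicHom_s17 (hmon : (X ^ n - 1 : F[X]).Monic)
    (u : AdjoinRoot (X ^ n - 1 : F[X])) :
    #(modByMonicHom hmon u).support = hammingNorm ((cyclicBasis F n).equivFun u) := by
  have hdeg : (modByMonicHom hmon u).degree < n := by
    induction u using AdjoinRoot.induction_on with
    | ih p =>
      have h := degree_modByMonic_lt p hmon
      rwa [degree_eq_natDegree hmon.ne_zero, natDegree_X_pow_sub_one] at h
  exact card_support_eq_hammingNorm hdeg

lemma qpcWeight_eq_sum_hammingNorm (hmon : (X ^ n - 1 : F[X]).Monic) {t : ℕ}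
    (c : Fin t → AdjoinRoot (X ^ n - 1 : F[X])) :
    qpcWeight hmon c = ∑ i, hammingNorm ((cyclicBasis F n).equivFun (c i)) := by
  simp only [qpcWeight, card_support_modByMonicHom_s17]

lemma qpcWeight_vecCons_mul (hmon : (X ^ n - 1 : F[X]).Monic)
    (a₁ a₂ u : AdjoinRoot (X ^ n - 1 : F[X])) :
    qpcWeight hmon ![u, a₁ * u, a₂ * u] =
      hammingNorm ((cyclicBasis F n).equivFun u) +
        hammingNorm (circulant ((cyclicBasis F n).equivFun a₁) *ᵥ (cyclicBasis F n).equivFun u) +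
        hammingNorm (circulant ((cyclicBasis F n).equivFun a₂) *ᵥ (cyclicBasis F n).equivFun u) := by
  simp [qpcWeight_eq_sum_hammingNorm, Fin.sum_univ_three, cyclicBasis_equivFun_mul,
    -Basis.equivFun_apply]

end AdjoinRoot

open AdjoinRoot in
/-- there are units `a₁, a₂` of `R = F_2[x]/⟨x^5 − 1⟩` such that
the binary one-generator quasi-cyclic 3-CIS code
`C_a = {(u, a₁·u, a₂·u) : u ∈ R}`, an `F_2`-linear code of length 15 and
dimension 5, has minimum Hamming distance 7, which is the best possible
minimum distance of a binary linear `[15, 5]` code. -/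
theorem stmt_17 :
    ∃ a₁ a₂ : AdjoinRoot ((X : Polynomial (ZMod 2)) ^ 5 - 1),
      IsUnit a₁ ∧ IsUnit a₂ ∧
      (∀ c ∈ {c : Fin 3 → AdjoinRoot ((X : Polynomial (ZMod 2)) ^ 5 - 1) |
          ∃ u, c = ![u, a₁ * u, a₂ * u]}, c ≠ 0 →
        7 ≤ qpcWeight (monic_X_pow_sub_one' (by norm_num)) c) ∧
      (∃ c ∈ {c : Fin 3 → AdjoinRoot ((X : Polynomial (ZMod 2)) ^ 5 - 1) |
          ∃ u, c = ![u, a₁ * u, a₂ * u]}, c ≠ 0 ∧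
        qpcWeight (monic_X_pow_sub_one' (by norm_num)) c = 7) ∧
      -- best possible: every binary linear [15, 5] code has a nonzero word of
      -- weight at most 7
      ∀ D : Submodule (ZMod 2) (Fin 15 → ZMod 2),
        Module.finrank (ZMod 2) D = 5 →
          ∃ v ∈ D, v ≠ 0 ∧ hammingNorm v ≤ 7 := by
  refine ⟨(cyclicBasis (ZMod 2) 5).equivFun.symm ![1, 1, 1, 0, 0],
    (cyclicBasis (ZMod 2) 5).equivFun.symm ![1, 1, 0, 1, 0],
    isUnit_of_circulant_mulVec_eq_single (B := ![0, 1, 1, 0, 1]) (by decide),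
    isUnit_of_circulant_mulVec_eq_single (B := ![0, 1, 1, 1, 0]) (by decide),
    ?_, ⟨_, ⟨1, rfl⟩, fun h => one_ne_zero (congrFun h 0), ?_⟩,
    Submodule.exists_ne_zero_hammingNorm_le_seven⟩
  · rintro c ⟨u, rfl⟩ hc
    have hu : (cyclicBasis (ZMod 2) 5).equivFun u ≠ 0 := by
      refine fun h => hc ?_
      simp [(cyclicBasis (ZMod 2) 5).equivFun.map_eq_zero_iff.mp h]
    rw [qpcWeight_vecCons_mul]
    simp only [LinearEquiv.apply_symm_apply]
    generalize (cyclicBasis (ZMod 2) 5).equivFun u = m at hu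
    revert m
    decide
  · rw [qpcWeight_vecCons_mul, cyclicBasis_equivFun_one]
    simp only [LinearEquiv.apply_symm_apply]
    decide
end

section
/- There exist a separable monic polynomial h(x) ∈ F_2[x] of degree 6 and a unit a(x) of R = F_2[x]/⟨h(x)⟩ such that the binary one-generator quasi-polycyclic 2-CIS code C_a = {(u, a·u) : u ∈ R}, an F_2-linear code of length 12 and dimension 6, has minimum Hamming distance 4. -/
open Polynomial

/-!
Take `h = X⁶ + X + 1` and `a = 1 + x + x²`, whose inverse in `R` is `x² + x³ + x⁵`.
Since `a` is a unit, both halves of a nonzero codeword `(u, a u)` are nonzero, so a codeword of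
weight at most 3 has a half of weight 1: either `u` or `a u` is a scalar multiple of a power
`x^k`, `k < 6`. It therefore suffices to check that the six reductions of `a xᵏ` and the six of
`a⁻¹ xᵏ` all have weight at least 3. The codeword `(1, a)` has weight `1 + 3 = 4`.
-/

lemma Polynomial.support_sum_X_pow {R : Type*} [Semiring R] [Nontrivial R] (S : Finset ℕ) :
    (∑ i ∈ S, X ^ i : R[X]).support = S := by
  ext n
  simp [coeff_X_pow]

lemma Polynomial.degree_sum_X_pow_lt {R : Type*} [Semiring R] {S : Finset ℕ} {n : ℕ}
    (hS : ∀ i ∈ S, i < n) : (∑ i ∈ S, X ^ i : R[X]).degree < n :=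
  (degree_sum_le _ _).trans_lt <| (Finset.sup_lt_iff (WithBot.bot_lt_coe n)).2 fun i hi =>
    (degree_X_pow_le i).trans_lt (WithBot.coe_lt_coe.2 (hS i hi))

lemma Polynomial.support_smul_of_ne_zero {R : Type*} [Semiring R] [NoZeroDivisors R] {c : R}
    (hc : c ≠ 0) (p : R[X]) : (c • p).support = p.support := by
  ext n
  simp [hc]

namespace AdjoinRoot

variable {R : Type*} [CommRing R] {h : R[X]} (hmon : h.Monic)

noncomputable def weight (w : AdjoinRoot h) : ℕ := (modByMonicHom hmon w).support.card

variable {hmon}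

lemma qpcWeight_pair (u v : AdjoinRoot h) :
    qpcWeight hmon ![u, v] = weight hmon u + weight hmon v := by
  simp [qpcWeight, weight, Fin.sum_univ_two]

lemma weight_eq_zero_iff {w : AdjoinRoot h} : weight hmon w = 0 ↔ w = 0 := by
  rw [weight, Finset.card_eq_zero, support_eq_empty]
  refine ⟨fun hw => ?_, fun hw => by rw [hw, map_zero]⟩
  rw [← mk_leftInverse hmon w, hw, map_zero]

variable [IsDomain R]

lemma weight_smul {c : R} (hc : c ≠ 0) (w : AdjoinRoot h) :
    weight hmon (c • w) = weight hmon w := by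
  rw [weight, weight, map_smul, support_smul_of_ne_zero hc]

lemma weight_mk_sum_X_pow_add_mul {S : Finset ℕ} (hS : ∀ i ∈ S, i < h.natDegree) (q : R[X]) :
    weight hmon (mk h (∑ i ∈ S, X ^ i + h * q)) = S.card := by
  have hdeg : (∑ i ∈ S, X ^ i : R[X]).degree < h.degree :=
    degree_eq_natDegree hmon.ne_zero ▸ degree_sum_X_pow_lt hS
  rw [weight, modByMonicHom_mk, add_modByMonic, self_mul_modByMonic hmon, add_zero,
    (modByMonic_eq_self_iff hmon).mpr hdeg, support_sum_X_pow]

lemma exists_eq_smul_root_pow_of_weight_eq_one {w : AdjoinRoot h} (hw : weight hmon w = 1) :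
    ∃ c ≠ (0 : R), ∃ k < h.natDegree, w = c • root h ^ k := by
  obtain ⟨k, c, hc, hp⟩ := card_support_eq_one.mp hw
  refine ⟨c, hc, k, ?_, ?_⟩
  · have hdeg : (modByMonicHom hmon w).degree < h.degree := by
      rw [← mk_leftInverse hmon w, modByMonicHom_mk]
      exact degree_modByMonic_lt _ hmon
    rwa [hp, degree_C_mul_X_pow k hc, degree_eq_natDegree hmon.ne_zero, Nat.cast_lt] at hdeg
  · rw [← mk_leftInverse hmon w, hp, map_mul, mk_C, map_pow, mk_X, Algebra.smul_def]
    rfl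

lemma four_le_weight_add_weight_mul {a b : AdjoinRoot h} (hab : a * b = 1)
    (ha : ∀ k < h.natDegree, 3 ≤ weight hmon (a * root h ^ k))
    (hb : ∀ k < h.natDegree, 3 ≤ weight hmon (b * root h ^ k))
    {u : AdjoinRoot h} (hu : u ≠ 0) : 4 ≤ weight hmon u + weight hmon (a * u) := by
  have hau : a * u ≠ 0 := fun h0 => hu (by
    rw [← one_mul u, ← hab, mul_comm a, mul_assoc, h0, mul_zero])
  have hu1 : weight hmon u ≠ 0 := weight_eq_zero_iff.not.mpr hu
  have hau1 : weight hmon (a * u) ≠ 0 := weight_eq_zero_iff.not.mpr hau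
  by_cases hwu : weight hmon u = 1
  · obtain ⟨c, hc, k, hk, hck⟩ := exists_eq_smul_root_pow_of_weight_eq_one hwu
    rw [hwu, hck, mul_smul_comm, weight_smul hc]
    linarith [ha k hk]
  by_cases hwau : weight hmon (a * u) = 1
  · obtain ⟨c, hc, k, hk, hck⟩ := exists_eq_smul_root_pow_of_weight_eq_one hwau
    have hu_eq : u = c • (b * root h ^ k) := by
      rw [← mul_smul_comm, ← hck, ← mul_assoc, mul_comm b, hab, one_mul]
    have := hb k hk
    rw [← weight_smul hc, ← hu_eq] at this
    omega
  omega

end AdjoinRoot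

open AdjoinRoot

local notation "𝔥" => (X ^ 6 + X + 1 : (ZMod 2)[X])

lemma monic_X_pow_six_add_X_add_one : (𝔥).Monic := by monicity!

lemma natDegree_X_pow_six_add_X_add_one : (𝔥).natDegree = 6 := by compute_degree!

lemma separable_X_pow_six_add_X_add_one : (𝔥).Separable := by
  have hder : derivative 𝔥 = 1 := by
    rw [derivative_add, derivative_add, derivative_X_pow, derivative_X, derivative_one]
    reduce_mod_char
    simp
  rw [separable_def, hder]
  exact isCoprime_one_right

lemma weight_mk_of_eq_sum_X_pow_add_mul {p : (ZMod 2)[X]} (S : Finset ℕ) (q : (ZMod 2)[X])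
    (hp : p = ∑ i ∈ S, X ^ i + 𝔥 * q) (hS : S ⊆ Finset.range 6) :
    weight monic_X_pow_six_add_X_add_one (mk 𝔥 p) = S.card := by
  rw [hp, weight_mk_sum_X_pow_add_mul fun i hi => by
    rw [natDegree_X_pow_six_add_X_add_one]; exact Finset.mem_range.mp (hS hi)]

lemma three_le_weight_mul_root_pow {k : ℕ} (hk : k < 6) :
    3 ≤ weight monic_X_pow_six_add_X_add_one (mk 𝔥 (X ^ 2 + X + 1) * root 𝔥 ^ k) := by
  rw [← mk_X, ← map_pow, ← map_mul]
  interval_cases k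
  · rw [weight_mk_of_eq_sum_X_pow_add_mul {0, 1, 2} 0 (by simp [Finset.sum_insert]; grind)
      (by decide)]; decide
  · rw [weight_mk_of_eq_sum_X_pow_add_mul {1, 2, 3} 0 (by simp [Finset.sum_insert]; grind)
      (by decide)]; decide
  · rw [weight_mk_of_eq_sum_X_pow_add_mul {2, 3, 4} 0 (by simp [Finset.sum_insert]; grind)
      (by decide)]; decide
  · rw [weight_mk_of_eq_sum_X_pow_add_mul {3, 4, 5} 0 (by simp [Finset.sum_insert]; grind)
      (by decide)]; decide
  · rw [weight_mk_of_eq_sum_X_pow_add_mul {0, 1, 4, 5} 1 (by simp [Finset.sum_insert]; grind)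
      (by decide)]; decide
  · rw [weight_mk_of_eq_sum_X_pow_add_mul {0, 2, 5} (X + 1) (by simp [Finset.sum_insert]; grind)
      (by decide)]; decide

lemma three_le_weight_inv_mul_root_pow {k : ℕ} (hk : k < 6) :
    3 ≤ weight monic_X_pow_six_add_X_add_one (mk 𝔥 (X ^ 5 + X ^ 3 + X ^ 2) * root 𝔥 ^ k) := by
  rw [← mk_X, ← map_pow, ← map_mul]
  interval_cases k
  · rw [weight_mk_of_eq_sum_X_pow_add_mul {2, 3, 5} 0 (by simp [Finset.sum_insert]; grind)
      (by decide)]; decide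
  · rw [weight_mk_of_eq_sum_X_pow_add_mul {0, 1, 3, 4} 1 (by simp [Finset.sum_insert]; grind)
      (by decide)]; decide
  · rw [weight_mk_of_eq_sum_X_pow_add_mul {1, 2, 4, 5} X (by simp [Finset.sum_insert]; grind)
      (by decide)]; decide
  · rw [weight_mk_of_eq_sum_X_pow_add_mul {0, 1, 2, 3, 5} (X ^ 2 + 1)
      (by simp [Finset.sum_insert]; grind) (by decide)]; decide
  · rw [weight_mk_of_eq_sum_X_pow_add_mul {0, 2, 3, 4} (X ^ 3 + X + 1)
      (by simp [Finset.sum_insert]; grind) (by decide)]; decide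
  · rw [weight_mk_of_eq_sum_X_pow_add_mul {1, 3, 4, 5} (X ^ 4 + X ^ 2 + X)
      (by simp [Finset.sum_insert]; grind) (by decide)]; decide

lemma mk_mul_mk_inv : mk 𝔥 (X ^ 2 + X + 1) * mk 𝔥 (X ^ 5 + X ^ 3 + X ^ 2) = 1 := by
  rw [← map_mul, ← map_one (mk 𝔥), mk_eq_mk]
  exact ⟨X + 1, by grind⟩

/-- there are a separable monic polynomial `h ∈ F_2[x]` of
degree 6 and a unit `a` of `R = F_2[x]/⟨h⟩` such that the binary one-generator
quasi-polycyclic 2-CIS code `C_a = {(u, a·u) : u ∈ R}`, an `F_2`-linear code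
of length 12 and dimension 6, has minimum Hamming distance 4. -/
theorem stmt_19 :
    ∃ (h : Polynomial (ZMod 2)) (hmon : h.Monic), h.Separable ∧
      h.natDegree = 6 ∧
      ∃ a : AdjoinRoot h, IsUnit a ∧
        (∀ c ∈ {c : Fin 2 → AdjoinRoot h | ∃ u, c = ![u, a * u]}, c ≠ 0 →
          4 ≤ qpcWeight hmon c) ∧
        (∃ c ∈ {c : Fin 2 → AdjoinRoot h | ∃ u, c = ![u, a * u]}, c ≠ 0 ∧
          qpcWeight hmon c = 4) := by
  refine ⟨𝔥, monic_X_pow_six_add_X_add_one, separable_X_pow_six_add_X_add_one,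
    natDegree_X_pow_six_add_X_add_one, mk 𝔥 (X ^ 2 + X + 1), .of_mul_eq_one _ mk_mul_mk_inv,
    ?_, ?_⟩
  · rintro c ⟨u, rfl⟩ hc
    rw [qpcWeight_pair]
    refine four_le_weight_add_weight_mul mk_mul_mk_inv ?_ ?_ fun hu => hc (by simp [hu])
    · exact fun k hk => three_le_weight_mul_root_pow (natDegree_X_pow_six_add_X_add_one ▸ hk)
    · exact fun k hk =>
        three_le_weight_inv_mul_root_pow (natDegree_X_pow_six_add_X_add_one ▸ hk)
  · have : Nontrivial (AdjoinRoot 𝔥) := AdjoinRoot.nontrivial 𝔥 (by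
      rw [degree_eq_natDegree monic_X_pow_six_add_X_add_one.ne_zero,
        natDegree_X_pow_six_add_X_add_one]
      decide)
    refine ⟨![1, mk 𝔥 (X ^ 2 + X + 1) * 1], ⟨1, rfl⟩,
      fun h0 => one_ne_zero (congrFun h0 (0 : Fin 2)), ?_⟩
    rw [qpcWeight_pair, mul_one, ← map_one (mk 𝔥),
      weight_mk_of_eq_sum_X_pow_add_mul {0} 0 (by simp) (by decide),
      weight_mk_of_eq_sum_X_pow_add_mul {0, 1, 2} 0 (by simp [Finset.sum_insert]; grind)
        (by decide)]
    rfl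
end
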